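/- Let M ∈ ℕ, let (Z_n)_{n∈ℕ} be i.i.d. uniform random variables on [−1/(2M), 1/(2M)), let y_n = {n/M} − 1/(2M) (fractional part), and set X_n = y_n + Z_n (mod 1). Then for every s > 0 there is a constant C (depending on s and M) such that for all N of the form N = kM, Var(R(s,N)) ≤ C/N. -/

import Mathlib

/-!
Write `N R(s, N) = ∑_{i ≠ j} 1_{E i j}` with `E i j = {‖X i - X j‖ ≤ s / N}`. Since `‖·‖` sees
`X` only modulo one, `E i j` depends on `Z i - Z j` alone, and as the law of `Z j` has density
`M` on an interval of length `1 / M`, `P(E i j) ≤ 4 s M / N`. Expanding the variance of the sum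
into covariances, index pairs `{i, j}`, `{k, l}` that are disjoint contribute nothing by
independence, the `O(N²)` coinciding ones contribute at most `P(E i j)`, and the `O(N³)` ones
sharing exactly one index contribute at most `(4 s M / N)²`. So the variance of the count is
`O(N)` and that of `R(s, N)` is `O(1 / N)`.
-/

open MeasureTheory ProbabilityTheory Filter
open scoped ENNReal

/-- Distance of a real number to its nearest integer. -/
noncomputable def distToInt (x : ℝ) : ℝ := |x - round x|

open Classical in
/-- Number of ordered pairs `(i, j)` with `1 ≤ i ≠ j ≤ N` and `‖x i - x j‖ ≤ δ`. -/
noncomputable def pairCount (x : ℕ → ℝ) (δ : ℝ) (N : ℕ) : ℕ :=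
  ((Finset.Icc 1 N ×ˢ Finset.Icc 1 N).filter fun p =>
    p.1 ≠ p.2 ∧ distToInt (x p.1 - x p.2) ≤ δ).card

/-- The pair correlation statistic `R(s, N)`. -/
noncomputable def Rpair (x : ℕ → ℝ) (s : ℝ) (N : ℕ) : ℝ :=
  (pairCount x (s / N) N : ℝ) / N

/-- The weak pair correlation statistic `R_α(s, N)`. -/
noncomputable def Ralpha (x : ℕ → ℝ) (α s : ℝ) (N : ℕ) : ℝ :=
  (pairCount x (s / (N : ℝ) ^ α) N : ℝ) / (N : ℝ) ^ (2 - α)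

open Set

@[fun_prop]
lemma measurable_distToInt : Measurable distToInt := by
  have : Measurable fun x : ℝ => ((⌊x + 1 / 2⌋ : ℤ) : ℝ) :=
    measurable_from_top.comp (Int.measurable_floor.comp (measurable_id.add_const _))
  have h : distToInt = fun x => |x - ((⌊x + 1 / 2⌋ : ℤ) : ℝ)| := by
    funext x; rw [distToInt, round_eq]
  rw [h]
  exact (measurable_id.sub this).abs

lemma distToInt_neg_le (x : ℝ) : distToInt (-x) ≤ distToInt x := by
  have := round_le (-x) (-round x)
  rwa [Int.cast_neg, sub_neg_eq_add, neg_add_eq_sub, abs_sub_comm (round x : ℝ)] at this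

lemma distToInt_neg (x : ℝ) : distToInt (-x) = distToInt x :=
  (distToInt_neg_le x).antisymm (by simpa using distToInt_neg_le (-x))

lemma distToInt_add_intCast (x : ℝ) (m : ℤ) : distToInt (x + m) = distToInt x := by
  simp [distToInt, round_add_intCast]

lemma distToInt_fract_sub_fract (u v : ℝ) :
    distToInt (Int.fract u - Int.fract v) = distToInt (u - v) := by
  have : Int.fract u - Int.fract v = (u - v) + ((⌊v⌋ - ⌊u⌋ : ℤ) : ℝ) := by
    rw [Int.fract, Int.fract]; push_cast; ring
  rw [this, distToInt_add_intCast]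

lemma pairCount_fract (x : ℕ → ℝ) (δ : ℝ) (N : ℕ) :
    pairCount (fun n => Int.fract (x n)) δ N = pairCount x δ N := by
  simp only [pairCount, distToInt_fract_sub_fract]

lemma natCast_pairCount_eq_sum_offDiag (x : ℕ → ℝ) (δ : ℝ) (N : ℕ) :
    (pairCount x δ N : ℝ) =
      ∑ p ∈ (Finset.Icc 1 N).offDiag, if distToInt (x p.1 - x p.2) ≤ δ then 1 else 0 := by
  classical
  rw [pairCount, ← Finset.natCast_card_filter]
  congr 2
  ext p
  simp only [Finset.mem_filter, Finset.mem_product, Finset.mem_offDiag]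
  tauto

/-- `{z | ‖a - z‖ ≤ δ}` is a union of intervals of length `2δ` centred on `a + ℤ`, and at most
two of them meet an interval of length at most one. -/
lemma volume_distToInt_le_inter_Ico {δ : ℝ} (hδ : 0 ≤ δ) (a : ℝ) {t u : ℝ} (hu : u ≤ t + 1) :
    volume ({z | distToInt (a - z) ≤ δ} ∩ Ico t u) ≤ ENNReal.ofReal (4 * δ) := by
  set m := round (a - t)
  have hcover : {z | distToInt (a - z) ≤ δ} ∩ Ico t u ⊆
      Icc (a - m - δ) (a - m + δ) ∪ Icc (a - m + 1 - δ) (a - m + 1 + δ) := by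
    rintro z ⟨hz, hzt, hzu⟩
    have hle : round (a - z) ≤ m := by
      simp only [m, round_eq]; exact Int.floor_mono (by linarith)
    have hge : m - 1 ≤ round (a - z) := by
      simp only [m, round_eq, ← Int.floor_sub_one]; exact Int.floor_mono (by linarith)
    have hz' := abs_le.mp (show |a - z - round (a - z)| ≤ δ from hz)
    obtain h | h : round (a - z) = m ∨ round (a - z) = m - 1 := by omega
    · left; rw [h] at hz'; constructor <;> linarith
    · right; rw [h] at hz'; push_cast at hz'; constructor <;> linarith
  calc volume ({z | distToInt (a - z) ≤ δ} ∩ Ico t u)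
      ≤ volume (Icc (a - m - δ) (a - m + δ)) + volume (Icc (a - m + 1 - δ) (a - m + 1 + δ)) :=
        (measure_mono hcover).trans (measure_union_le _ _)
    _ = ENNReal.ofReal (4 * δ) := by
        rw [Real.volume_Icc, Real.volume_Icc, ← ENNReal.ofReal_add (by linarith) (by linarith)]
        ring_nf

lemma uniform_distToInt_le {M : ℕ} (hM : 0 < M) {δ : ℝ} (hδ : 0 ≤ δ) (a : ℝ) :
    ((M : ℝ≥0∞) • volume.restrict (Ico (-(1 / (2 * M)) : ℝ) (1 / (2 * M))))
      {z | distToInt (a - z) ≤ δ} ≤ ENNReal.ofReal (4 * δ * M) := by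
  have hlen : 1 / (2 * M) ≤ -(1 / (2 * M) : ℝ) + 1 := by
    have : 1 / (2 * M : ℝ) ≤ 1 / 2 :=
      one_div_le_one_div_of_le two_pos (by linarith [(Nat.one_le_cast (α := ℝ)).mpr hM])
    linarith
  rw [Measure.smul_apply, Measure.restrict_apply' measurableSet_Ico, smul_eq_mul,
    ENNReal.ofReal_mul (by positivity), ENNReal.ofReal_natCast, mul_comm]
  gcongr
  exact volume_distToInt_le_inter_Ico hδ a hlen

lemma card_filter_eq_or_eq_swap_le_two {α : Type*} [DecidableEq α] (t : Finset (α × α))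
    (p : α × α) : (t.filter fun q => q = p ∨ q = p.swap).card ≤ 2 :=
  (Finset.card_le_card fun q hq => by simpa using (Finset.mem_filter.mp hq).2).trans
    Finset.card_le_two

lemma card_offDiag_filter_share_le {α : Type*} [DecidableEq α] (s : Finset α) (p : α × α) :
    (s.offDiag.filter fun q => p.1 = q.1 ∨ p.1 = q.2 ∨ p.2 = q.1 ∨ p.2 = q.2).card ≤
      4 * s.card := by
  have hsub : s.offDiag.filter (fun q => p.1 = q.1 ∨ p.1 = q.2 ∨ p.2 = q.1 ∨ p.2 = q.2) ⊆
      ({p.1, p.2} ×ˢ s) ∪ (s ×ˢ {p.1, p.2}) := by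
    intro q hq
    simp only [Finset.mem_filter, Finset.mem_offDiag] at hq
    simp only [Finset.mem_union, Finset.mem_product, Finset.mem_insert, Finset.mem_singleton]
    grind
  calc _ ≤ _ := (Finset.card_le_card hsub).trans (Finset.card_union_le _ _)
    _ ≤ 2 * s.card + s.card * 2 := by
      rw [Finset.card_product, Finset.card_product]
      gcongr <;> exact Finset.card_le_two
    _ = 4 * s.card := by ring

section PairEvents

variable {Ω : Type*} [MeasurableSpace Ω] {P : Measure Ω}

lemma memLp_indicator_one [IsFiniteMeasure P] {A : Set Ω} (hA : MeasurableSet A) :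
    MemLp (A.indicator (1 : Ω → ℝ)) 2 P :=
  memLp_indicator_const 2 hA 1 (Or.inr (measure_ne_top P _))

lemma covariance_indicator_one [IsProbabilityMeasure P] {A B : Set Ω}
    (hA : MeasurableSet A) (hB : MeasurableSet B) :
    cov[A.indicator 1, B.indicator 1; P] = P.real (A ∩ B) - P.real A * P.real B := by
  rw [covariance_eq_sub (memLp_indicator_one hA) (memLp_indicator_one hB),
    ← Set.inter_indicator_one, integral_indicator_one (hA.inter hB), integral_indicator_one hA,
    integral_indicator_one hB]

/-- The dependency structure of the events `‖X i - X j‖ ≤ δ` for independent `X i`, which is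
all that the variance bound uses. -/
structure PairEventBounds {α : Type*} (P : Measure Ω) (E : α → α → Set Ω) (ε : ℝ) : Prop where
  measurableSet : ∀ i j, MeasurableSet (E i j)
  symm : ∀ i j, E i j = E j i
  nonneg : 0 ≤ ε
  measureReal_le : ∀ i j, i ≠ j → P.real (E i j) ≤ ε
  measureReal_inter_le : ∀ i j l, i ≠ j → i ≠ l → j ≠ l → P.real (E i j ∩ E i l) ≤ ε ^ 2
  measureReal_inter_eq : ∀ i j k l, i ≠ k → i ≠ l → j ≠ k → j ≠ l →
    P.real (E i j ∩ E k l) = P.real (E i j) * P.real (E k l)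

namespace PairEventBounds

variable {α : Type*} {E : α → α → Set Ω} {ε : ℝ} (h : PairEventBounds P E ε)
include h

lemma measureReal_inter_le_of_share {p q : α × α} (hp : p.1 ≠ p.2) (hq : q.1 ≠ q.2)
    (hne : ¬(q = p ∨ q = p.swap)) (hshare : p.1 = q.1 ∨ p.1 = q.2 ∨ p.2 = q.1 ∨ p.2 = q.2) :
    P.real (E p.1 p.2 ∩ E q.1 q.2) ≤ ε ^ 2 := by
  obtain ⟨a, b⟩ := p
  obtain ⟨c, d⟩ := q
  simp only [Prod.mk.injEq, Prod.swap_prod_mk, not_or, not_and] at hp hq hne hshare ⊢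
  rcases hshare with rfl | rfl | rfl | rfl
  · exact h.measureReal_inter_le a b d hp hq fun hbd => hne.1 rfl hbd.symm
  · rw [h.symm c a]
    exact h.measureReal_inter_le a b c hp hq.symm fun hbc => hne.2 hbc.symm rfl
  · rw [h.symm a b]
    exact h.measureReal_inter_le b a d hp.symm hq fun had => hne.2 rfl had.symm
  · rw [h.symm a b, h.symm c b]
    exact h.measureReal_inter_le b a c hp.symm hq.symm fun hac => hne.1 hac.symm rfl

variable [IsProbabilityMeasure P] [DecidableEq α]

lemma covariance_indicator_le {p q : α × α} (hp : p.1 ≠ p.2) (hq : q.1 ≠ q.2) :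
    cov[(E p.1 p.2).indicator 1, (E q.1 q.2).indicator 1; P] ≤
      (if q = p ∨ q = p.swap then ε else 0) +
        if p.1 = q.1 ∨ p.1 = q.2 ∨ p.2 = q.1 ∨ p.2 = q.2 then ε ^ 2 else 0 := by
  rw [covariance_indicator_one (h.measurableSet _ _) (h.measurableSet _ _)]
  have hprod : 0 ≤ P.real (E p.1 p.2) * P.real (E q.1 q.2) := by positivity
  by_cases hshare : p.1 = q.1 ∨ p.1 = q.2 ∨ p.2 = q.1 ∨ p.2 = q.2
  · rw [if_pos hshare]
    by_cases hsame : q = p ∨ q = p.swap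
    · rw [if_pos hsame]
      have := measureReal_mono (μ := P) (Set.inter_subset_left (s := E p.1 p.2) (t := E q.1 q.2))
      linarith [h.measureReal_le _ _ hp, sq_nonneg ε]
    · rw [if_neg hsame]
      linarith [h.measureReal_inter_le_of_share hp hq hsame hshare]
  · simp only [not_or] at hshare
    obtain ⟨h11, h12, h21, h22⟩ := hshare
    rw [if_neg (by rintro (rfl | rfl) <;> simp_all), if_neg (by tauto),
      h.measureReal_inter_eq _ _ _ _ h11 h12 h21 h22]
    simp

lemma sum_covariance_indicator_offDiag_le (s : Finset α) {p : α × α} (hp : p ∈ s.offDiag) :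
    ∑ q ∈ s.offDiag, cov[(E p.1 p.2).indicator 1, (E q.1 q.2).indicator 1; P] ≤
      2 * ε + 4 * s.card * ε ^ 2 := by
  calc _ ≤ ∑ q ∈ s.offDiag, ((if q = p ∨ q = p.swap then ε else 0) +
        if p.1 = q.1 ∨ p.1 = q.2 ∨ p.2 = q.1 ∨ p.2 = q.2 then ε ^ 2 else 0) :=
        Finset.sum_le_sum fun q hq => h.covariance_indicator_le
          (Finset.mem_offDiag.mp hp).2.2 (Finset.mem_offDiag.mp hq).2.2
    _ = (s.offDiag.filter fun q => q = p ∨ q = p.swap).card * ε +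
        (s.offDiag.filter fun q =>
          p.1 = q.1 ∨ p.1 = q.2 ∨ p.2 = q.1 ∨ p.2 = q.2).card * ε ^ 2 := by
        rw [Finset.sum_add_distrib, Finset.sum_ite, Finset.sum_ite]
        simp
    _ ≤ 2 * ε + 4 * s.card * ε ^ 2 := by
        have := h.nonneg
        gcongr
        · exact_mod_cast card_filter_eq_or_eq_swap_le_two s.offDiag p
        · exact_mod_cast card_offDiag_filter_share_le s p

theorem variance_sum_indicator_offDiag_le (s : Finset α) :
    Var[∑ p ∈ s.offDiag, (E p.1 p.2).indicator 1; P] ≤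
      s.card ^ 2 * (2 * ε + 4 * s.card * ε ^ 2) := by
  rw [variance_sum' fun p _ => memLp_indicator_one (h.measurableSet p.1 p.2)]
  calc _ ≤ ∑ _p ∈ s.offDiag, (2 * ε + 4 * s.card * ε ^ 2) :=
        Finset.sum_le_sum fun p hp => h.sum_covariance_indicator_offDiag_le s hp
    _ ≤ s.card ^ 2 * (2 * ε + 4 * s.card * ε ^ 2) := by
        rw [Finset.sum_const, nsmul_eq_mul]
        have := h.nonneg
        gcongr
        rw [Finset.offDiag_card, sq]
        exact_mod_cast Nat.sub_le _ _

end PairEventBounds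

end PairEvents

section Jitter

variable {ν : Measure ℝ} {δ ε : ℝ}

lemma prod_distToInt_le [IsProbabilityMeasure ν]
    (hν : ∀ a, ν {z | distToInt (a - z) ≤ δ} ≤ ENNReal.ofReal ε) (a b : ℝ) :
    ν.prod ν {q | distToInt ((a + q.1) - (b + q.2)) ≤ δ} ≤ ENNReal.ofReal ε := by
  rw [Measure.prod_apply (measurableSet_le (by fun_prop) measurable_const)]
  calc ∫⁻ x, ν (Prod.mk x ⁻¹' {q | distToInt ((a + q.1) - (b + q.2)) ≤ δ}) ∂ν
      ≤ ∫⁻ _, ENNReal.ofReal ε ∂ν := lintegral_mono fun x => by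
        convert hν (a + x - b) using 3
        ext z
        simp only [Set.mem_preimage, Set.mem_ofPred_eq]
        ring_nf
    _ = ENNReal.ofReal ε := by simp

/-- Conditionally on the shared variable, the two events are independent. -/
lemma prod_prod_distToInt_le [IsProbabilityMeasure ν]
    (hν : ∀ a, ν {z | distToInt (a - z) ≤ δ} ≤ ENNReal.ofReal ε) (a b d : ℝ) :
    ν.prod (ν.prod ν) {q | distToInt ((a + q.1) - (b + q.2.1)) ≤ δ ∧
      distToInt ((a + q.1) - (d + q.2.2)) ≤ δ} ≤ ENNReal.ofReal ε * ENNReal.ofReal ε := by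
  have hS : MeasurableSet {q : ℝ × ℝ × ℝ | distToInt ((a + q.1) - (b + q.2.1)) ≤ δ ∧
      distToInt ((a + q.1) - (d + q.2.2)) ≤ δ} := by
    rw [Set.ofPred_and]
    exact (measurableSet_le (by fun_prop) measurable_const).inter
      (measurableSet_le (by fun_prop) measurable_const)
  rw [Measure.prod_apply hS]
  calc ∫⁻ x, ν.prod ν (Prod.mk x ⁻¹' {q | distToInt ((a + q.1) - (b + q.2.1)) ≤ δ ∧
        distToInt ((a + q.1) - (d + q.2.2)) ≤ δ}) ∂ν
      ≤ ∫⁻ _, ENNReal.ofReal ε * ENNReal.ofReal ε ∂ν := lintegral_mono fun x => by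
        have hslice : Prod.mk x ⁻¹' {q : ℝ × ℝ × ℝ | distToInt ((a + q.1) - (b + q.2.1)) ≤ δ ∧
            distToInt ((a + q.1) - (d + q.2.2)) ≤ δ} =
            {y | distToInt ((a + x - b) - y) ≤ δ} ×ˢ {z | distToInt ((a + x - d) - z) ≤ δ} := by
          ext ⟨y, z⟩
          simp only [Set.mem_preimage, Set.mem_ofPred_eq, Set.mem_prod]
          ring_nf
        rw [hslice, Measure.prod_prod]
        exact mul_le_mul' (hν _) (hν _)
    _ = ENNReal.ofReal ε * ENNReal.ofReal ε := by simp

variable {ι : Type*} {Ω : Type*} [MeasurableSpace Ω] {P : Measure Ω} [IsProbabilityMeasure P]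
  {Z : ι → Ω → ℝ} (hZ : ∀ i, Measurable (Z i)) (hind : iIndepFun Z P)
  (hlaw : ∀ i, P.map (Z i) = ν)
include hZ hind hlaw

lemma map_prodMk_eq_prod {i j : ι} (hij : i ≠ j) :
    P.map (fun ω => (Z i ω, Z j ω)) = ν.prod ν := by
  rw [(indepFun_iff_map_prod_eq_prod_map_map (hZ i).aemeasurable (hZ j).aemeasurable).mp
    (hind.indepFun hij), hlaw, hlaw]

lemma map_prodMk_prodMk_eq_prod {i j l : ι} (hij : i ≠ j) (hil : i ≠ l) (hjl : j ≠ l) :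
    P.map (fun ω => (Z i ω, Z j ω, Z l ω)) = ν.prod (ν.prod ν) := by
  rw [(indepFun_iff_map_prod_eq_prod_map_map (hZ i).aemeasurable
    ((hZ j).prodMk (hZ l)).aemeasurable).mp
    (hind.indepFun_prodMk hZ j l i hij.symm hil.symm).symm, hlaw,
    map_prodMk_eq_prod hZ hind hlaw hjl]

variable [IsProbabilityMeasure ν] (hε : 0 ≤ ε)
  (hν : ∀ a, ν {z | distToInt (a - z) ≤ δ} ≤ ENNReal.ofReal ε)
include hε hν

theorem pairEventBounds_of_iIndepFun (c : ι → ℝ) :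
    PairEventBounds P (fun i j => {ω | distToInt ((c i + Z i ω) - (c j + Z j ω)) ≤ δ}) ε where
  measurableSet i j := measurableSet_le (by fun_prop) measurable_const
  symm i j := by
    ext ω
    simp only [Set.mem_ofPred_eq]
    rw [← neg_sub, distToInt_neg]
  nonneg := hε
  measureReal_le i j hij := by
    refine ENNReal.toReal_le_of_le_ofReal hε ?_
    calc P {ω | distToInt ((c i + Z i ω) - (c j + Z j ω)) ≤ δ}
        = P.map (fun ω => (Z i ω, Z j ω)) {q | distToInt ((c i + q.1) - (c j + q.2)) ≤ δ} := by
          rw [Measure.map_apply ((hZ i).prodMk (hZ j))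
            (measurableSet_le (by fun_prop) measurable_const)]
          rfl
      _ ≤ ENNReal.ofReal ε := by
          rw [map_prodMk_eq_prod hZ hind hlaw hij]
          exact prod_distToInt_le hν _ _
  measureReal_inter_le i j l hij hil hjl := by
    refine ENNReal.toReal_le_of_le_ofReal (by positivity) ?_
    calc P ({ω | distToInt ((c i + Z i ω) - (c j + Z j ω)) ≤ δ} ∩
          {ω | distToInt ((c i + Z i ω) - (c l + Z l ω)) ≤ δ})
        = P.map (fun ω => (Z i ω, Z j ω, Z l ω))
            {q | distToInt ((c i + q.1) - (c j + q.2.1)) ≤ δ ∧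
              distToInt ((c i + q.1) - (c l + q.2.2)) ≤ δ} := by
          rw [Set.ofPred_and, Measure.map_apply ((hZ i).prodMk ((hZ j).prodMk (hZ l)))
            ((measurableSet_le (by fun_prop) measurable_const).inter
              (measurableSet_le (by fun_prop) measurable_const))]
          rfl
      _ ≤ ENNReal.ofReal (ε ^ 2) := by
          rw [map_prodMk_prodMk_eq_prod hZ hind hlaw hij hil hjl, sq, ENNReal.ofReal_mul hε]
          exact prod_prod_distToInt_le hν _ _ _
  measureReal_inter_eq i j k l hik hil hjk hjl := by
    simp only [measureReal_def, ← ENNReal.toReal_mul]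
    congr 1
    exact (hind.indepFun_prodMk_prodMk hZ i j k l hik hil hjk hjl).measure_inter_preimage_eq_mul
      {q : ℝ × ℝ | distToInt ((c i + q.1) - (c j + q.2)) ≤ δ}
      {q : ℝ × ℝ | distToInt ((c k + q.1) - (c l + q.2)) ≤ δ}
      (measurableSet_le (by fun_prop) measurable_const)
      (measurableSet_le (by fun_prop) measurable_const)

end Jitter

theorem variance_pairCount_le {Ω : Type*} [MeasurableSpace Ω] {P : Measure Ω}
    [IsProbabilityMeasure P] {Z : ℕ → Ω → ℝ} (hZ : ∀ n, Measurable (Z n)) (hind : iIndepFun Z P)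
    {ν : Measure ℝ} [IsProbabilityMeasure ν] (hlaw : ∀ n, P.map (Z n) = ν) {δ ε : ℝ}
    (hε : 0 ≤ ε) (hν : ∀ a, ν {z | distToInt (a - z) ≤ δ} ≤ ENNReal.ofReal ε)
    (c : ℕ → ℝ) (N : ℕ) :
    Var[fun ω => (pairCount (fun n => c n + Z n ω) δ N : ℝ); P] ≤
      N ^ 2 * (2 * ε + 4 * N * ε ^ 2) := by
  have h := (pairEventBounds_of_iIndepFun hZ hind hlaw hε hν c).variance_sum_indicator_offDiag_le
    (Finset.Icc 1 N)
  rw [Nat.card_Icc, add_tsub_cancel_right] at h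
  convert h using 2
  funext ω
  rw [natCast_pairCount_eq_sum_offDiag, Finset.sum_apply]
  simp only [Set.indicator_apply, Set.mem_ofPred_eq, Pi.one_apply]

/-- For the decomposed `M`-batch jittered sample `X n = {y n + Z n}` with
`y n = {n/M} - 1/(2M)` and `Z n` i.i.d. uniform on `[-1/(2M), 1/(2M))`, the
variance of the pair correlation statistic at `N = kM` is `O(1/N)`. -/
theorem mBatchDecomposition_variance_le
    {Ω : Type*} [MeasurableSpace Ω] (P : Measure Ω) [IsProbabilityMeasure P]
    (M : ℕ) (hM : 0 < M)
    (Z : ℕ → Ω → ℝ) (hZmeas : ∀ n, Measurable (Z n))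
    (hZindep : iIndepFun Z P)
    (hZdist : ∀ n, Measure.map (Z n) P
      = (M : ℝ≥0∞) • volume.restrict (Set.Ico (-(1 / (2 * M)) : ℝ) (1 / (2 * M))))
    (X : ℕ → Ω → ℝ)
    (hX : ∀ n ω, X n ω = Int.fract (Int.fract ((n : ℝ) / M) - 1 / (2 * M) + Z n ω))
    (s : ℝ) (hs : 0 < s) :
    ∃ C : ℝ, ∀ k : ℕ, 1 ≤ k →
      variance (fun ω => Rpair (fun n => X n ω) s (k * M)) P ≤ C / (k * M : ℕ) := by
  refine ⟨8 * s * M + 64 * s ^ 2 * M ^ 2, fun k hk => ?_⟩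
  have : IsProbabilityMeasure
      ((M : ℝ≥0∞) • volume.restrict (Set.Ico (-(1 / (2 * M)) : ℝ) (1 / (2 * M)))) :=
    hZdist 0 ▸ Measure.isProbabilityMeasure_map (hZmeas 0).aemeasurable
  set N := k * M
  have hN : (0 : ℝ) < N := Nat.cast_pos.mpr (Nat.mul_pos hk hM)
  have hR : (fun ω => Rpair (fun n => X n ω) s N) = fun ω => (N : ℝ)⁻¹ *
      pairCount (fun n => (Int.fract ((n : ℝ) / M) - 1 / (2 * M)) + Z n ω) (s / N) N := by
    funext ω
    simp only [Rpair, hX, pairCount_fract, div_eq_inv_mul]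
  have hδ : 0 ≤ s / N := by positivity
  rw [hR, variance_const_mul]
  calc (N : ℝ)⁻¹ ^ 2 * Var[_; P]
      ≤ (N : ℝ)⁻¹ ^ 2 * (N ^ 2 * (2 * (4 * (s / N) * M) + 4 * N * (4 * (s / N) * M) ^ 2)) := by
        gcongr
        exact variance_pairCount_le hZmeas hZindep hZdist (by positivity)
          (uniform_distToInt_le hM hδ) _ N
    _ = (8 * s * M + 64 * s ^ 2 * M ^ 2) / N := by
        field_simp
        ring
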